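/- Let n ≥ 1 and let D_{2n} = {x ∈ ℤ^{2n} : Σᵢ xᵢ ∈ 2ℤ} with the standard inner product. Suppose h is an isometry of D_{2n} (a ℤ-linear automorphism preserving the inner product) of order 4 with h² = −1. Then there exist α₁, …, α_{2n} ∈ D_{2n} with ⟨αᵢ, αⱼ⟩ = 2δᵢⱼ for all i, j, such that h(α_{2i−1}) = α_{2i} and h(α_{2i}) = −α_{2i−1} for all i = 1, …, n. -/

import Mathlib

/-- The root lattice `D_k = {x ∈ ℤ^k : Σ xᵢ ∈ 2ℤ}` as a `ℤ`-submodule of `ℤ^k`. -/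
def Dlat (k : ℕ) : Submodule ℤ (Fin k → ℤ) where
  carrier := {x | (2 : ℤ) ∣ ∑ i, x i}
  add_mem' := by
    rintro a b ⟨u, hu⟩ ⟨v, hv⟩
    exact ⟨u + v, by simp only [Pi.add_apply, Finset.sum_add_distrib, hu, hv]; ring⟩
  zero_mem' := ⟨0, by simp⟩
  smul_mem' := by
    rintro c x ⟨u, hu⟩
    exact ⟨c * u, by
      simp only [Pi.smul_apply, smul_eq_mul, ← Finset.mul_sum, hu]; ring⟩

/-!
Choose roots `α₁, α₂, …` one at a time, each orthogonal to all earlier `αᵢ` and `h αᵢ`. Then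
`h α` is orthogonal to them and to `α` as well, because `⟨h x, y⟩ = -⟨x, h y⟩` for an isometry
with `h² = -1`. So it suffices that fewer than `N - 1` pairwise orthogonal roots of `ℤ^N`
(vectors `±e_k ± e_l`) always admit another root orthogonal to all of them; such a root
automatically has even coordinate sum. Write the roots as the rows of a matrix `r` with
`r rᵀ = 2`. If some column of `r` has a single nonzero entry `±1`, it lies in a root
`a e_k + b e_l` whose coordinate `k` no other root touches; orthogonality then forces the other
roots to vanish at `l` too, and `b e_k - a e_l` works. Otherwise every nonzero column `c` has
`c ⬝ᵥ c ≥ 2`, while these add up to `tr (rᵀ r) = tr (r rᵀ) = 2 · #rows`; so at least two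
columns `k ≠ l` vanish and `e_k + e_l` works.
-/

open Matrix Finset

section DotProduct

variable {κ : Type*} [Fintype κ]

theorem Int.two_dvd_dotProduct_self_sub_sum (v : κ → ℤ) : 2 ∣ v ⬝ᵥ v - ∑ k, v k := by
  rw [dotProduct, ← sum_sub_distrib]
  exact dvd_sum fun k _ => by
    simpa [mul_sub_one] using (Int.even_mul_pred_self (v k)).two_dvd

variable {ι : Type*} [Fintype ι] [DecidableEq ι]

theorem Matrix.exists_ne_col_eq_zero_of_mul_transpose_eq_two {r : Matrix ι κ ℤ}
    (hr : r * rᵀ = 2) (hcard : Fintype.card ι + 2 ≤ Fintype.card κ)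
    (hcol : ∀ k, r.col k ⬝ᵥ r.col k ≠ 1) : ∃ k l, k ≠ l ∧ r.col k = 0 ∧ r.col l = 0 := by
  have hnonneg (k : κ) : 0 ≤ r.col k ⬝ᵥ r.col k := Fintype.sum_nonneg fun t => mul_self_nonneg _
  have htrace : ∑ k, r.col k ⬝ᵥ r.col k = 2 * Fintype.card ι := by
    change trace (rᵀ * r) = _
    rw [trace_mul_comm, hr]
    simp [trace, Matrix.ofNat_apply, mul_comm]
  have hnonzero : 2 * (#{k | r.col k ⬝ᵥ r.col k ≠ 0} : ℤ) ≤ 2 * Fintype.card ι := by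
    rw [← htrace]
    calc 2 * (#{k | r.col k ⬝ᵥ r.col k ≠ 0} : ℤ)
        = ∑ k with r.col k ⬝ᵥ r.col k ≠ 0, 2 := by rw [sum_const, nsmul_eq_mul, mul_comm]
      _ ≤ ∑ k with r.col k ⬝ᵥ r.col k ≠ 0, r.col k ⬝ᵥ r.col k := sum_le_sum fun k hk => by
        have := hcol k
        have := hnonneg k
        have := (mem_filter.mp hk).2
        omega
      _ ≤ ∑ k, r.col k ⬝ᵥ r.col k :=
        sum_le_sum_of_subset_of_nonneg (subset_univ _) fun k _ _ => hnonneg k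
  have hsplit := card_filter_add_card_filter_not (s := univ) fun k => r.col k ⬝ᵥ r.col k = 0
  simp only [card_univ, ← ne_eq] at hsplit
  obtain ⟨k, hk, l, hl, hkl⟩ := one_lt_card.mp (by omega : 1 < #{k | r.col k ⬝ᵥ r.col k = 0})
  rw [mem_filter, dotProduct_self_eq_zero] at hk hl
  exact ⟨k, l, hkl, hk.2, hl.2⟩

variable [DecidableEq κ]

theorem Int.exists_eq_single_of_dotProduct_self_eq_one {v : κ → ℤ} (hv : v ⬝ᵥ v = 1) :
    ∃ k, v k * v k = 1 ∧ v = Pi.single k (v k) := by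
  obtain ⟨k, hk⟩ : ∃ k, v k ≠ 0 := by
    by_contra! h
    simp [funext h] at hv
  have hle (s : Finset κ) : ∑ m ∈ s, v m * v m ≤ 1 :=
    hv ▸ sum_le_sum_of_subset_of_nonneg s.subset_univ fun m _ _ => mul_self_nonneg (v m)
  have hk1 : v k * v k = 1 := by
    have := hle {k}
    have := mul_self_pos.mpr hk
    rw [sum_singleton] at *
    omega
  refine ⟨k, hk1, funext fun m => ?_⟩
  rcases eq_or_ne m k with rfl | hm
  · simp
  · have := hle {k, m}
    rw [sum_pair hm.symm, hk1] at this
    simpa [hm] using mul_self_eq_zero.mp (le_antisymm (by omega) (mul_self_nonneg (v m)))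

theorem Int.exists_eq_single_add_single_of_dotProduct_self_eq_two {v : κ → ℤ}
    (hv : v ⬝ᵥ v = 2) {k : κ} (hk : v k ≠ 0) :
    ∃ l, l ≠ k ∧ v k * v k = 1 ∧ v l * v l = 1 ∧ v = Pi.single k (v k) + Pi.single l (v l) := by
  have hk1 : v k * v k = 1 := by
    have hle : v k * v k ≤ 2 :=
      hv ▸ single_le_sum (fun m _ => mul_self_nonneg (v m)) (mem_univ k)
    obtain ⟨h1, h2⟩ : -1 ≤ v k ∧ v k ≤ 1 := by constructor <;> nlinarith
    interval_cases (v k) <;> simp_all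
  set w := v - Pi.single k (v k) with hw
  have hww : w ⬝ᵥ w = 1 := by
    simp only [hw, sub_dotProduct, dotProduct_sub, single_dotProduct, dotProduct_single, hv, hk1]
    norm_num
  obtain ⟨l, hl1, hl⟩ := Int.exists_eq_single_of_dotProduct_self_eq_one hww
  have hlk : l ≠ k := by
    rintro rfl
    simp [hw] at hl1
  have hwl : w l = v l := by simp [hw, hlk]
  refine ⟨l, hlk, hk1, hwl ▸ hl1, ?_⟩
  rw [← hwl, ← hl, hw, add_sub_cancel]

theorem Matrix.exists_root_mulVec_eq_zero_of_col_dotProduct_self_eq_one {r : Matrix ι κ ℤ}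
    (hr : r * rᵀ = 2) {k : κ} (hk : r.col k ⬝ᵥ r.col k = 1) :
    ∃ v : κ → ℤ, v ⬝ᵥ v = 2 ∧ r *ᵥ v = 0 := by
  have hrr (t t' : ι) : r t ⬝ᵥ r t' = if t = t' then 2 else 0 := by
    have := congrFun (congrFun hr t) t'
    rw [Matrix.ofNat_apply] at this
    push_cast at this
    exact this
  obtain ⟨t, htk, hcol⟩ := Int.exists_eq_single_of_dotProduct_self_eq_one hk
  rw [col_apply] at htk
  have hk_only (t' : ι) (ht' : t' ≠ t) : r t' k = 0 := by
    simpa [ht'] using congrFun hcol t'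
  obtain ⟨l, hlk, -, hl1, hrt⟩ := Int.exists_eq_single_add_single_of_dotProduct_self_eq_two
    (by simpa using hrr t t) (k := k) (by rintro h; simp [h] at htk)
  refine ⟨Pi.single k (r t l) - Pi.single l (r t k), ?_, funext fun t' => ?_⟩
  · simp [dotProduct_sub, hlk, hlk.symm, htk, hl1]
  change r t' ⬝ᵥ _ = 0
  rw [dotProduct_sub, dotProduct_single, dotProduct_single]
  rcases eq_or_ne t' t with rfl | ht'
  · ring
  have hl_only : r t l * r t' l = 0 := by
    have := hrr t t'
    rw [if_neg ht'.symm] at this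
    nth_rewrite 1 [hrt] at this
    simpa [add_dotProduct, hk_only t' ht'] using this
  have : r t' l = 0 := by
    rcases mul_eq_zero.mp hl_only with h | h
    · simp [h] at hl1
    · exact h
  simp [hk_only t' ht', this]

theorem Matrix.exists_root_mulVec_eq_zero_of_mul_transpose_eq_two {r : Matrix ι κ ℤ}
    (hr : r * rᵀ = 2) (hcard : Fintype.card ι + 2 ≤ Fintype.card κ) :
    ∃ v : κ → ℤ, v ⬝ᵥ v = 2 ∧ r *ᵥ v = 0 := by
  by_cases hcol : ∃ k, r.col k ⬝ᵥ r.col k = 1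
  · obtain ⟨k, hk⟩ := hcol
    exact exists_root_mulVec_eq_zero_of_col_dotProduct_self_eq_one hr hk
  push Not at hcol
  obtain ⟨k, l, hkl, hk, hl⟩ := exists_ne_col_eq_zero_of_mul_transpose_eq_two hr hcard hcol
  refine ⟨Pi.single k 1 + Pi.single l 1, ?_, ?_⟩
  · simp [dotProduct_add, hkl, hkl.symm]
  · rw [mulVec_add, mulVec_single_one, mulVec_single_one, hk, hl, add_zero]

end DotProduct

namespace LinearMap.BilinForm

variable {M : Type*} [AddCommGroup M] {B : LinearMap.BilinForm ℤ M} {h : M → M}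

theorem apply_map_eq_neg_apply_map (hB : ∀ x y, B (h x) (h y) = B x y)
    (hsq : ∀ x, h (h x) = -x) (x y : M) : B (h x) y = -B x (h y) := by
  rw [← hB, hsq, map_neg₂]

theorem apply_map_self_eq_zero (hBs : B.IsSymm) (hB : ∀ x y, B (h x) (h y) = B x y)
    (hsq : ∀ x, h (h x) = -x) (x : M) : B x (h x) = 0 := by
  have := apply_map_eq_neg_apply_map hB hsq x x
  rw [hBs.eq] at this
  omega

/-- For an isometry `h` with `h² = -1` this makes all `2m` vectors `a i`, `h (a i)` pairwise
orthogonal roots (`IsOrthoRootPairs.sumElim`). -/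
def IsOrthoRootPairs (B : LinearMap.BilinForm ℤ M) (h : M → M) {m : ℕ} (a : Fin m → M) : Prop :=
  ∀ i j, B (a i) (a j) = (if i = j then 2 else 0) ∧ B (a i) (h (a j)) = 0

namespace IsOrthoRootPairs

variable {m : ℕ} {a : Fin m → M}

theorem sumElim (hB : ∀ x y, B (h x) (h y) = B x y) (hsq : ∀ x, h (h x) = -x)
    (ha : IsOrthoRootPairs B h a) (t t' : Fin m ⊕ Fin m) :
    B (Sum.elim a (h ∘ a) t) (Sum.elim a (h ∘ a) t') = if t = t' then 2 else 0 := by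
  rcases t with i | i <;> rcases t' with j | j
  · simpa using (ha i j).1
  · simpa using (ha i j).2
  · simpa [apply_map_eq_neg_apply_map hB hsq] using (ha i j).2
  · simpa [hB] using (ha i j).1

theorem snoc (hBs : B.IsSymm) (hB : ∀ x y, B (h x) (h y) = B x y) (hsq : ∀ x, h (h x) = -x)
    (ha : IsOrthoRootPairs B h a) {α : M} (hαα : B α α = 2)
    (hα : ∀ i, B α (a i) = 0 ∧ B α (h (a i)) = 0) :
    IsOrthoRootPairs B h (Fin.snoc a α : Fin (m + 1) → M) := by
  intro i j
  induction i using Fin.lastCases with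
  | last =>
    induction j using Fin.lastCases with
    | last => simpa using ⟨hαα, apply_map_self_eq_zero hBs hB hsq α⟩
    | cast j => simpa [(Fin.castSucc_lt_last j).ne'] using hα j
  | cast i =>
    induction j using Fin.lastCases with
    | last =>
      simp only [Fin.snoc_last, Fin.snoc_castSucc, (Fin.castSucc_lt_last i).ne, if_false]
      refine ⟨(hBs.eq _ _).trans (hα i).1, ?_⟩
      rw [← neg_neg (B (a i) (h α)), ← apply_map_eq_neg_apply_map hB hsq, hBs.eq, (hα i).2,
        neg_zero]
    | cast j => simpa using ha i j

end IsOrthoRootPairs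

theorem exists_isOrthoRootPairs (hBs : B.IsSymm) (hB : ∀ x y, B (h x) (h y) = B x y)
    (hsq : ∀ x, h (h x) = -x) (n : ℕ)
    (hroot : ∀ m < n, ∀ r : Fin m ⊕ Fin m → M,
      (∀ t t', B (r t) (r t') = if t = t' then 2 else 0) → ∃ α, B α α = 2 ∧ ∀ t, B α (r t) = 0) :
    ∃ a : Fin n → M, IsOrthoRootPairs B h a := by
  suffices ∀ m ≤ n, ∃ a : Fin m → M, IsOrthoRootPairs B h a from this n le_rfl
  intro m hm
  induction m with
  | zero => exact ⟨Fin.elim0, fun i => i.elim0⟩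
  | succ m ih =>
    obtain ⟨a, ha⟩ := ih (by omega)
    obtain ⟨α, hαα, hα⟩ := hroot m hm _ (ha.sumElim hB hsq)
    exact ⟨_, ha.snoc hBs hB hsq hαα fun i => ⟨hα (.inl i), hα (.inr i)⟩⟩

end LinearMap.BilinForm

namespace Dlat

def innerForm (N : ℕ) : LinearMap.BilinForm ℤ (Dlat N) :=
  LinearMap.BilinForm.restrict (dotProductBilin ℤ ℤ) (Dlat N)

theorem innerForm_isSymm (N : ℕ) : (innerForm N).IsSymm :=
  ⟨fun x y => dotProduct_comm (x : Fin N → ℤ) y⟩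

theorem exists_root_orthogonal {N : ℕ} {ι : Type*} [Fintype ι] [DecidableEq ι] (r : ι → Dlat N)
    (hr : ∀ t t', innerForm N (r t) (r t') = if t = t' then 2 else 0)
    (hcard : Fintype.card ι + 2 ≤ N) :
    ∃ α, innerForm N α α = 2 ∧ ∀ t, innerForm N α (r t) = 0 := by
  let R : Matrix ι (Fin N) ℤ := fun t => r t
  have hR : R * Rᵀ = 2 := by
    ext t t'
    rw [Matrix.ofNat_apply]
    push_cast
    exact hr t t'
  obtain ⟨v, hvv, hv⟩ :=
    R.exists_root_mulVec_eq_zero_of_mul_transpose_eq_two hR (by rwa [Fintype.card_fin])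
  have hv_mem : v ∈ Dlat N :=
    (dvd_sub_right (dvd_of_eq hvv.symm)).mp (Int.two_dvd_dotProduct_self_sub_sum v)
  refine ⟨⟨v, hv_mem⟩, hvv, fun t => ?_⟩
  change v ⬝ᵥ r t = 0
  rw [dotProduct_comm]
  exact congrFun hv t

end Dlat

theorem stmt_19_general (n : ℕ)
    (h : Dlat (2 * n) ≃ₗ[ℤ] Dlat (2 * n))
    (hB : ∀ u v : Dlat (2 * n),
      (∑ k, (h u : Fin (2 * n) → ℤ) k * (h v : Fin (2 * n) → ℤ) k) =
        ∑ k, (u : Fin (2 * n) → ℤ) k * (v : Fin (2 * n) → ℤ) k)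
    (hsq : ∀ x : Dlat (2 * n), h (h x) = -x) :
    ∃ a b : Fin n → Dlat (2 * n),
      (∀ i j, (∑ k, (a i : Fin (2 * n) → ℤ) k * (a j : Fin (2 * n) → ℤ) k) =
        if i = j then 2 else 0) ∧
      (∀ i j, (∑ k, (b i : Fin (2 * n) → ℤ) k * (b j : Fin (2 * n) → ℤ) k) =
        if i = j then 2 else 0) ∧
      (∀ i j, (∑ k, (a i : Fin (2 * n) → ℤ) k * (b j : Fin (2 * n) → ℤ) k) = 0) ∧
      (∀ i, h (a i) = b i ∧ h (b i) = -(a i)) := by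
  obtain ⟨a, ha⟩ := LinearMap.BilinForm.exists_isOrthoRootPairs (Dlat.innerForm_isSymm _) hB hsq n
    fun m hm r hr => Dlat.exists_root_orthogonal r hr (by
      rw [Fintype.card_sum, Fintype.card_fin]
      omega)
  exact ⟨a, fun i => h (a i), fun i j => (ha i j).1, fun i j => (hB _ _).trans (ha i j).1,
    fun i j => (ha i j).2, fun i => ⟨rfl, hsq _⟩⟩

/-- Let `n ≥ 1` and let `h` be an isometry of the root lattice `D_{2n}` of
order 4 with `h² = −1`. Then there exist `α₁, …, α_{2n} ∈ D_{2n}` with `⟨αᵢ,αⱼ⟩ = 2δᵢⱼ`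
such that `h(α_{2i−1}) = α_{2i}` and `h(α_{2i}) = −α_{2i−1}` for `i = 1, …, n`
(here `a i = α_{2i−1}` and `b i = α_{2i}`). -/
theorem stmt_19 (n : ℕ) (hn : 1 ≤ n)
    (h : Dlat (2 * n) ≃ₗ[ℤ] Dlat (2 * n))
    (hB : ∀ u v : Dlat (2 * n),
      (∑ k, (h u : Fin (2 * n) → ℤ) k * (h v : Fin (2 * n) → ℤ) k) =
        ∑ k, (u : Fin (2 * n) → ℤ) k * (v : Fin (2 * n) → ℤ) k)
    (hord : orderOf h = 4)
    (hsq : ∀ x : Dlat (2 * n), h (h x) = -x) :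
    ∃ a b : Fin n → Dlat (2 * n),
      (∀ i j, (∑ k, (a i : Fin (2 * n) → ℤ) k * (a j : Fin (2 * n) → ℤ) k) =
        if i = j then 2 else 0) ∧
      (∀ i j, (∑ k, (b i : Fin (2 * n) → ℤ) k * (b j : Fin (2 * n) → ℤ) k) =
        if i = j then 2 else 0) ∧
      (∀ i j, (∑ k, (a i : Fin (2 * n) → ℤ) k * (b j : Fin (2 * n) → ℤ) k) = 0) ∧
      (∀ i, h (a i) = b i ∧ h (b i) = -(a i)) :=
  stmt_19_general n h hB hsq
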